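/- For every integer n ≥ 2 there exists ε > 0 such that for all real t with 0 < t < ε, the matrix X(t) := ((I − S)ᵀ·(I − S))^{−1}·((I + t·S)·(I + t·S)ᵀ)^{n−1} is totally positive. -/

import Mathlib

open Matrix

noncomputable section

/-- The n×n shift matrix: S_{i,j} = 1 if j = i + 1 (1-based) and 0 otherwise. -/
def shiftM (n : ℕ) : Matrix (Fin n) (Fin n) ℝ :=
  Matrix.of fun i j => if (i : ℕ) + 1 = (j : ℕ) then 1 else 0

/-- A real square matrix is totally nonnegative if every minor (determinant of a
square submatrix given by strictly increasing row and column selections) is ≥ 0. -/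
def TotallyNonneg {n : ℕ} (A : Matrix (Fin n) (Fin n) ℝ) : Prop :=
  ∀ (k : ℕ) (r c : Fin k → Fin n), StrictMono r → StrictMono c →
    0 ≤ (A.submatrix r c).det

/-- A real square matrix is totally positive if every minor is > 0. -/
def TotallyPos {n : ℕ} (A : Matrix (Fin n) (Fin n) ℝ) : Prop :=
  ∀ (k : ℕ) (r c : Fin k → Fin n), StrictMono r → StrictMono c →
    0 < (A.submatrix r c).det

/-!
Since `(I - S)⁻¹ = U`, the upper triangular all-ones matrix, `X(t) = (U Uᵀ) B ^ (n - 1)` with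
`B = (I + tS)(I + tS)ᵀ`. A minor of an upper bidiagonal matrix such as `I + tS` is the product of
the entries `W (rⱼ) (cⱼ)`, and a minor of `U` is `0` or equals the minor left after deleting its
first row and column; so both are totally nonnegative. By Cauchy–Binet, every product of them and
their transposes is then totally nonnegative too, and a minor of such a product dominates each
single Cauchy–Binet term. Keeping the term through the rows `r` themselves gives
`X[r, c] ≥ (U Uᵀ)[r, r] · B^(n-1)[r, c]`. Here `(U Uᵀ)[r, r] ≥ U[r, r]² = 1`, and
`B^d[r, c] > 0` as soon as `|rⱼ - cⱼ| ≤ d` for all `j`, by induction on `d`: each factor `B`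
lets every index move by one. Indices in `Fin n` are at distance at most `n - 1`, so this works
for every `t > 0`.
-/

open Finset

def strictMonoMaps (k n : ℕ) : Finset (Fin k → Fin n) := {f | StrictMono f}

lemma mem_strictMonoMaps {k n : ℕ} {f : Fin k → Fin n} :
    f ∈ strictMonoMaps k n ↔ StrictMono f := by
  simp [strictMonoMaps]

lemma eq_of_strictMono_comp_perm {k n : ℕ} {f g : Fin k → Fin n} {σ τ : Equiv.Perm (Fin k)}
    (hf : StrictMono f) (hg : StrictMono g) (h : f ∘ σ = g ∘ τ) : f = g ∧ σ = τ := by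
  have hfg : f = g := by
    rw [← hf.range_inj hg, ← σ.surjective.range_comp f, h, τ.surjective.range_comp g]
  subst hfg
  exact ⟨rfl, Equiv.ext fun i => hf.injective (congrFun h i)⟩

lemma sum_injective_eq_sum_strictMonoMaps_perm {M : Type*} [AddCommMonoid M] {k n : ℕ}
    (g : (Fin k → Fin n) → M) :
    ∑ p : Fin k → Fin n with Function.Injective p, g p
      = ∑ f ∈ strictMonoMaps k n, ∑ τ : Equiv.Perm (Fin k), g (f ∘ τ) := by
  rw [← sum_product' (s := strictMonoMaps k n) (t := univ)
    (f := fun (f : Fin k → Fin n) (τ : Equiv.Perm (Fin k)) => g (f ∘ τ))]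
  symm
  refine sum_bij (fun x _ => x.1 ∘ x.2) ?_ ?_ ?_ fun _ _ => rfl
  · rintro ⟨f, τ⟩ hx
    simpa using (mem_strictMonoMaps.mp (mem_product.mp hx).1).injective.comp τ.injective
  · rintro ⟨f, σ⟩ hfσ ⟨g, τ⟩ hgτ h
    obtain ⟨rfl, rfl⟩ := eq_of_strictMono_comp_perm
      (mem_strictMonoMaps.mp (mem_product.mp hfσ).1)
      (mem_strictMonoMaps.mp (mem_product.mp hgτ).1) h
    rfl
  · intro p hp
    have hp : Function.Injective p := (mem_filter.mp hp).2
    have hsorted : StrictMono (p ∘ Tuple.sort p) :=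
      (Tuple.monotone_sort p).strictMono_of_injective (hp.comp (Tuple.sort p).injective)
    refine ⟨(p ∘ Tuple.sort p, (Tuple.sort p)⁻¹), mem_product.mpr
      ⟨mem_strictMonoMaps.mpr hsorted, mem_univ _⟩, ?_⟩
    ext i
    simp

theorem det_mul_eq_sum_det_submatrix {R : Type*} [CommRing R] {k n : ℕ}
    (A : Matrix (Fin k) (Fin n) R) (B : Matrix (Fin n) (Fin k) R) :
    (A * B).det
      = ∑ f ∈ strictMonoMaps k n, (A.submatrix id f).det * (B.submatrix f id).det := by
  have hexpand :
      (A * B).det = ∑ p : Fin k → Fin n, (A.submatrix id p).det * ∏ i, B (p i) i := by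
    simp only [det_apply', mul_apply, prod_univ_sum, mul_sum, Fintype.piFinset_univ, sum_mul,
      prod_mul_distrib, submatrix_apply, id_eq, mul_assoc]
    exact sum_comm
  have hinjective : ∑ p : Fin k → Fin n, (A.submatrix id p).det * ∏ i, B (p i) i
      = ∑ p with Function.Injective p, (A.submatrix id p).det * ∏ i, B (p i) i := by
    refine (sum_subset (filter_subset _ _) fun p _ hp => ?_).symm
    obtain ⟨i, j, hpij, hij⟩ := Function.not_injective_iff.mp (by simpa using hp)
    rw [det_zero_of_column_eq hij fun a => by simp [hpij], zero_mul]
  rw [hexpand, hinjective, sum_injective_eq_sum_strictMonoMaps_perm]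
  refine sum_congr rfl fun f _ => ?_
  rw [det_apply' (B.submatrix f id), mul_sum]
  refine sum_congr rfl fun τ _ => ?_
  rw [show A.submatrix id (f ∘ τ) = (A.submatrix id f).submatrix id τ from rfl, det_permute' τ]
  simp only [submatrix_apply, id_eq, Function.comp_apply]
  ring

theorem det_submatrix_mul_eq_sum {R : Type*} [CommRing R] {k l m n : ℕ}
    (A : Matrix (Fin l) (Fin n) R) (B : Matrix (Fin n) (Fin m) R) (r : Fin k → Fin l)
    (c : Fin k → Fin m) :
    ((A * B).submatrix r c).det
      = ∑ f ∈ strictMonoMaps k n, (A.submatrix r f).det * (B.submatrix f c).det := by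
  rw [submatrix_mul A B r id c Function.bijective_id, det_mul_eq_sum_det_submatrix]
  rfl

namespace TotallyNonneg

variable {n : ℕ} {A B : Matrix (Fin n) (Fin n) ℝ}

theorem transpose (hA : TotallyNonneg A) : TotallyNonneg Aᵀ := fun k r c hr hc => by
  rw [← transpose_submatrix, det_transpose]
  exact hA k c r hc hr

theorem mul (hA : TotallyNonneg A) (hB : TotallyNonneg B) : TotallyNonneg (A * B) :=
  fun k r c hr hc => by
    rw [det_submatrix_mul_eq_sum]
    exact sum_nonneg fun f hf =>
      mul_nonneg (hA k r f hr (mem_strictMonoMaps.mp hf)) (hB k f c (mem_strictMonoMaps.mp hf) hc)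

theorem det_mul_det_le_det_submatrix_mul (hA : TotallyNonneg A) (hB : TotallyNonneg B)
    {k : ℕ} {r c f : Fin k → Fin n} (hr : StrictMono r) (hc : StrictMono c)
    (hf : StrictMono f) :
    (A.submatrix r f).det * (B.submatrix f c).det ≤ ((A * B).submatrix r c).det := by
  rw [det_submatrix_mul_eq_sum]
  refine single_le_sum (f := fun f => (A.submatrix r f).det * (B.submatrix f c).det)
    (fun g hg => ?_) (mem_strictMonoMaps.mpr hf)
  exact mul_nonneg (hA k r g hr (mem_strictMonoMaps.mp hg)) (hB k g c (mem_strictMonoMaps.mp hg) hc)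

end TotallyNonneg

theorem det_eq_mul_det_submatrix_succ_of {R : Type*} [CommRing R] {k : ℕ}
    (M : Matrix (Fin (k + 1)) (Fin (k + 1)) R)
    (h : ∀ i : Fin k, M i.succ 0 = 0 ∨ (M.submatrix i.succ.succAbove Fin.succ).det = 0) :
    M.det = M 0 0 * (M.submatrix Fin.succ Fin.succ).det := by
  rw [det_succ_column_zero, Fin.sum_univ_succ, sum_eq_zero fun i _ => ?_]
  · simp
  · rcases h i with h | h <;> simp [h]

theorem det_submatrix_of_upperBidiagonal {R : Type*} [CommRing R] {n : ℕ}
    {W : Matrix (Fin n) (Fin n) R}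
    (hW : ∀ i j : Fin n, (j : ℕ) ≠ i → (j : ℕ) ≠ i + 1 → W i j = 0) :
    ∀ {k : ℕ} {r c : Fin k → Fin n}, StrictMono r → StrictMono c →
      (W.submatrix r c).det = ∏ j, W (r j) (c j)
  | 0, _, _, _, _ => by simp
  | k + 1, r, c, hr, hc => by
    rw [det_eq_mul_det_submatrix_succ_of, submatrix_submatrix,
      det_submatrix_of_upperBidiagonal hW (hr.comp Fin.strictMono_succ)
        (hc.comp Fin.strictMono_succ), Fin.prod_univ_succ]
    · rfl
    -- a nonzero entry `W (r i) (c 0)` below the corner forces `c 0 > r 0`, and then the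
    -- row `r 0` vanishes on all later columns
    intro i
    refine or_iff_not_imp_left.mpr fun hne => ?_
    have hci : (r i.succ : ℕ) ≤ c 0 := by
      by_contra! hlt
      exact hne (hW _ _ (by omega) (by omega))
    have hr0 : (r 0 : ℕ) < r i.succ := hr (Fin.succ_pos i)
    have : NeZero k := ⟨i.pos.ne'⟩
    refine det_eq_zero_of_row_eq_zero 0 fun j => ?_
    have hcj : (c 0 : ℕ) < c j.succ := hc (Fin.succ_pos j)
    simp only [submatrix_apply, Fin.succ_succAbove_zero]
    exact hW _ _ (by omega) (by omega)

theorem totallyNonneg_of_upperBidiagonal {n : ℕ} {W : Matrix (Fin n) (Fin n) ℝ}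
    (hW : ∀ i j : Fin n, (j : ℕ) ≠ i → (j : ℕ) ≠ i + 1 → W i j = 0)
    (hnonneg : ∀ i j, 0 ≤ W i j) :
    TotallyNonneg W := fun _ _ _ hr hc => by
  rw [det_submatrix_of_upperBidiagonal hW hr hc]
  exact prod_nonneg fun _ _ => hnonneg _ _

theorem TotallyNonneg.one {n : ℕ} : TotallyNonneg (1 : Matrix (Fin n) (Fin n) ℝ) :=
  totallyNonneg_of_upperBidiagonal (fun i j hij _ => one_apply_ne fun h => hij (by rw [h]))
    fun i j => by by_cases h : i = j <;> simp [one_apply, h]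

theorem TotallyNonneg.pow {n : ℕ} {A : Matrix (Fin n) (Fin n) ℝ} (hA : TotallyNonneg A) :
    ∀ d : ℕ, TotallyNonneg (A ^ d)
  | 0 => by rw [pow_zero]; exact TotallyNonneg.one
  | d + 1 => by rw [pow_succ]; exact (hA.pow d).mul hA

section OneAddSmulShift

variable {n : ℕ} {t : ℝ}

theorem one_add_smul_shiftM_apply (i j : Fin n) :
    (1 + t • shiftM n) i j = if i = j then 1 else if (i : ℕ) + 1 = j then t else 0 := by
  by_cases hij : i = j
  · subst hij
    simp [shiftM]
  · simp [shiftM, one_apply, hij]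

theorem one_add_smul_shiftM_eq_zero {i j : Fin n} (h₀ : (j : ℕ) ≠ i)
    (h₁ : (j : ℕ) ≠ i + 1) :
    (1 + t • shiftM n) i j = 0 := by
  rw [one_add_smul_shiftM_apply, if_neg (fun h => h₀ (by rw [h])), if_neg (Ne.symm h₁)]

theorem totallyNonneg_one_add_smul_shiftM (ht : 0 ≤ t) : TotallyNonneg (1 + t • shiftM n) :=
  totallyNonneg_of_upperBidiagonal (fun _ _ => one_add_smul_shiftM_eq_zero) fun i j => by
    rw [one_add_smul_shiftM_apply]
    split_ifs <;> first | exact zero_le_one | exact ht | exact le_rfl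

theorem det_submatrix_one_add_smul_shiftM_pos (ht : 0 < t) {k : ℕ} {r c : Fin k → Fin n}
    (hr : StrictMono r) (hc : StrictMono c)
    (hrc : ∀ j, (c j : ℕ) = r j ∨ (c j : ℕ) = r j + 1) :
    0 < ((1 + t • shiftM n).submatrix r c).det := by
  rw [det_submatrix_of_upperBidiagonal (fun _ _ => one_add_smul_shiftM_eq_zero) hr hc]
  refine prod_pos fun j _ => ?_
  rw [one_add_smul_shiftM_apply]
  rcases hrc j with h | h
  · rw [if_pos (Fin.ext h.symm)]
    exact one_pos
  · rw [if_neg (fun he => by rw [he] at h; omega), if_pos h.symm]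
    exact ht

theorem det_submatrix_one_add_smul_shiftM_mul_transpose_pos (ht : 0 < t) {k : ℕ}
    {r c : Fin k → Fin n} (hr : StrictMono r) (hc : StrictMono c)
    (hrc : ∀ j, (r j : ℕ) ≤ c j + 1 ∧ (c j : ℕ) ≤ r j + 1) :
    0 < (((1 + t • shiftM n) * (1 + t • shiftM n)ᵀ).submatrix r c).det := by
  have hP := totallyNonneg_one_add_smul_shiftM (n := n) ht.le
  let g : Fin k → Fin n := fun j => max (r j) (c j)
  have hg : StrictMono g := fun a b hab => max_lt_max (hr hab) (hc hab)
  refine (mul_pos ?_ ?_).trans_le (hP.det_mul_det_le_det_submatrix_mul hP.transpose hr hc hg)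
  · refine det_submatrix_one_add_smul_shiftM_pos ht hr hg fun j => ?_
    have := hrc j
    simp only [g, Fin.coe_max]
    omega
  · rw [← transpose_submatrix, det_transpose]
    refine det_submatrix_one_add_smul_shiftM_pos ht hc hg fun j => ?_
    have := hrc j
    simp only [g, Fin.coe_max]
    omega

theorem det_submatrix_pow_pos (ht : 0 < t) :
    ∀ (d : ℕ) {k : ℕ} {r c : Fin k → Fin n}, StrictMono r → StrictMono c →
      (∀ j, (r j : ℕ) ≤ c j + d ∧ (c j : ℕ) ≤ r j + d) →
      0 < ((((1 + t • shiftM n) * (1 + t • shiftM n)ᵀ) ^ d).submatrix r c).det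
  | 0, k, r, c, hr, hc, hrc => by
    obtain rfl : r = c := funext fun j => Fin.ext (by have := hrc j; omega)
    rw [pow_zero, submatrix_one r hr.injective, det_one]
    exact one_pos
  | d + 1, k, r, c, hr, hc, hrc => by
    have hP := totallyNonneg_one_add_smul_shiftM (n := n) ht.le
    -- route each row `r j` to column `c j` through the intermediate index `c j` clamped to
    -- `[r j - 1, r j + 1]`
    let g : Fin k → Fin n := fun j =>
      ⟨max (min (c j : ℕ) (r j + 1)) (r j - 1), by
        have := (r j).isLt
        have := (c j).isLt
        omega⟩
    have hg : StrictMono g := fun a b hab => by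
      have := hr hab
      have := hc hab
      simp only [g, Fin.lt_def] at *
      omega
    rw [pow_succ']
    have hB := hP.mul hP.transpose
    refine (mul_pos ?_ ?_).trans_le (hB.det_mul_det_le_det_submatrix_mul (hB.pow d) hr hc hg)
    · refine det_submatrix_one_add_smul_shiftM_mul_transpose_pos ht hr hg fun j => ?_
      simp only [g]
      omega
    · refine det_submatrix_pow_pos ht d hg hc fun j => ?_
      have := hrc j
      simp only [g]
      omega

end OneAddSmulShift

def upperOnes (n : ℕ) : Matrix (Fin n) (Fin n) ℝ :=
  Matrix.of fun i j => if i ≤ j then 1 else 0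

theorem shiftM_mul_apply {n : ℕ} (M : Matrix (Fin n) (Fin n) ℝ) (i j : Fin n) :
    (shiftM n * M) i j = if h : (i : ℕ) + 1 < n then M ⟨i + 1, h⟩ j else 0 := by
  rw [mul_apply]
  split_ifs with h
  · rw [sum_eq_single ⟨i + 1, h⟩ fun l _ hl => by simp [shiftM, Fin.ext_iff] at hl ⊢; omega]
    · simp [shiftM]
    · simp
  · exact sum_eq_zero fun l _ => by simp [shiftM]; omega

theorem one_sub_shiftM_mul_upperOnes (n : ℕ) : (1 - shiftM n) * upperOnes n = 1 := by
  ext i j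
  rw [sub_mul, one_mul, Matrix.sub_apply, shiftM_mul_apply, one_apply]
  simp only [upperOnes, of_apply, Fin.le_def, Fin.ext_iff]
  have := j.isLt
  split_ifs <;> (try norm_num) <;> omega

theorem inv_transpose_one_sub_shiftM_mul (n : ℕ) :
    ((1 - shiftM n)ᵀ * (1 - shiftM n))⁻¹ = upperOnes n * (upperOnes n)ᵀ := by
  have h : (1 - shiftM n)⁻¹ = upperOnes n := inv_eq_right_inv (one_sub_shiftM_mul_upperOnes n)
  rw [Matrix.mul_inv_rev, h, ← transpose_nonsing_inv, h]

theorem totallyNonneg_upperOnes (n : ℕ) : TotallyNonneg (upperOnes n) := by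
  intro k
  induction k with
  | zero => simp
  | succ k ih =>
    intro r c hr hc
    by_cases hrow : ∃ i : Fin k, r i.succ ≤ c 0
    · -- then rows `0` and `i + 1` of the minor consist of ones only
      obtain ⟨i, hi⟩ := hrow
      have hr0 : r 0 < r i.succ := hr (Fin.succ_pos i)
      refine (det_zero_of_row_eq (Fin.succ_ne_zero i).symm (funext fun j => ?_)).ge
      have hcj : c 0 ≤ c j := hc.monotone (Fin.zero_le j)
      simp only [submatrix_apply, upperOnes, of_apply]
      rw [if_pos (by order), if_pos (by order)]
    · push Not at hrow
      rw [det_eq_mul_det_submatrix_succ_of _ fun i => .inl ?_]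
      · rw [submatrix_submatrix]
        refine mul_nonneg ?_ (ih _ _ (hr.comp Fin.strictMono_succ) (hc.comp Fin.strictMono_succ))
        simp only [submatrix_apply, upperOnes, of_apply]
        split_ifs <;> norm_num
      · simp [upperOnes, (hrow i).not_ge]

theorem det_submatrix_upperOnes_self {n k : ℕ} {r : Fin k → Fin n} (hr : StrictMono r) :
    ((upperOnes n).submatrix r r).det = 1 := by
  rw [det_of_isUpperTriangular fun i j hji => by simpa [upperOnes] using hr hji]
  exact prod_eq_one fun i _ => by simp [upperOnes]

theorem det_submatrix_upperOnes_mul_transpose_self_pos {n k : ℕ} {r : Fin k → Fin n}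
    (hr : StrictMono r) : 0 < ((upperOnes n * (upperOnes n)ᵀ).submatrix r r).det := by
  have hU := totallyNonneg_upperOnes n
  refine lt_of_lt_of_le ?_ (hU.det_mul_det_le_det_submatrix_mul hU.transpose hr hr hr)
  rw [← transpose_submatrix, det_transpose, det_submatrix_upperOnes_self hr, one_mul]
  exact one_pos

theorem statement_17_general (n : ℕ) :
    ∃ ε : ℝ, 0 < ε ∧ ∀ t : ℝ, 0 < t → t < ε →
      TotallyPos (((1 - shiftM n)ᵀ * (1 - shiftM n))⁻¹ *
        ((1 + t • shiftM n) * (1 + t • shiftM n)ᵀ) ^ (n - 1)) := by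
  refine ⟨1, one_pos, fun t ht _ k r c hr hc => ?_⟩
  rw [inv_transpose_one_sub_shiftM_mul]
  have hU := totallyNonneg_upperOnes n
  have hP := totallyNonneg_one_add_smul_shiftM (n := n) ht.le
  have hband : ∀ j, (r j : ℕ) ≤ c j + (n - 1) ∧ (c j : ℕ) ≤ r j + (n - 1) := fun j => by
    have := (r j).isLt
    have := (c j).isLt
    omega
  exact (mul_pos (det_submatrix_upperOnes_mul_transpose_self_pos hr)
    (det_submatrix_pow_pos ht (n - 1) hr hc hband)).trans_le
    ((hU.mul hU.transpose).det_mul_det_le_det_submatrix_mul ((hP.mul hP.transpose).pow _)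
      hr hc hr)

/-- for n ≥ 2 there is ε > 0 such that for all 0 < t < ε the
matrix X(t) = ((I − S)ᵀ·(I − S))⁻¹·((I + t·S)·(I + t·S)ᵀ)^{n−1} is totally
positive. -/
theorem statement_17 (n : ℕ) (hn : 2 ≤ n) :
    ∃ ε : ℝ, 0 < ε ∧ ∀ t : ℝ, 0 < t → t < ε →
      TotallyPos (((1 - shiftM n)ᵀ * (1 - shiftM n))⁻¹ *
        ((1 + t • shiftM n) * (1 + t • shiftM n)ᵀ) ^ (n - 1)) :=
  statement_17_general n
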